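/- arXiv:1806.04633 — 2 statements merged into one kernel-verified Lean document; each statement's English description precedes it below -/
import Mathlib

section
/- On the 2-sphere of constant curvature κ > 0 with base point õ, fix p̃ with d(p̃,õ) = r₀ ∈ (0, π/√κ). For a unit speed geodesic (r(t), θ(t)) starting at p̃ with r(0)=r₀, the function y(x) = r(x) along the geodesic satisfies the differential equation dy/dx = (cos(√κ r₀) - cos(√κ y)cos(√κ x)) / (sin(√κ x) sin(√κ y)), whenever sin(√κ x) sin(√κ y) ≠ 0. That is, the slope field of reference images of geodesics from p̃ is 𝔰(x,y) = (cos(√κ r₀) - cos(√κ y)cos(√κ x))/(sin(√κ x) sin(√κ y)). -/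
open Real Set

/-- On the 2-sphere of constant curvature `κ > 0` with base point `õ` and
`p̃` at distance `r₀ ∈ (0, π/√κ)` from `õ`, a unit speed geodesic emanating from `p̃` has
radial coordinate `r(t)` satisfying the spherical law of cosines
`cos(√κ r(t)) = cos(√κ t)cos(√κ r₀) - rdot₀ sin(√κ t)sin(√κ r₀)`.  Wherever
`sin(√κ x) sin(√κ r(x)) ≠ 0`, the derivative of `r` equals the slope field
`𝔰(x,y) = (cos(√κ r₀) - cos(√κ y)cos(√κ x))/(sin(√κ x) sin(√κ y))` at `(x, r(x))`. -/
theorem stmt2 (κ : ℝ) (hκ : 0 < κ) (r₀ : ℝ) (hr₀ : r₀ ∈ Ioo 0 (π / Real.sqrt κ))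
    (rdot₀ : ℝ) (hrdot₀ : |rdot₀| ≤ 1) (r : ℝ → ℝ) (hr0 : r 0 = r₀)
    (hgeo : ∀ t : ℝ, Real.cos (Real.sqrt κ * r t) =
      Real.cos (Real.sqrt κ * t) * Real.cos (Real.sqrt κ * r₀) -
        rdot₀ * Real.sin (Real.sqrt κ * t) * Real.sin (Real.sqrt κ * r₀))
    (x m : ℝ)
    (hx : Real.sin (Real.sqrt κ * x) * Real.sin (Real.sqrt κ * r x) ≠ 0)
    (hm : HasDerivAt r m x) :
    m = (Real.cos (Real.sqrt κ * r₀) -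
          Real.cos (Real.sqrt κ * r x) * Real.cos (Real.sqrt κ * x)) /
        (Real.sin (Real.sqrt κ * x) * Real.sin (Real.sqrt κ * r x)) := by
  set s := Real.sqrt κ with hs
  -- derivative of LHS
  have h1 : HasDerivAt (fun t => Real.cos (s * r t))
      (-Real.sin (s * r x) * (s * m)) x := by
    simpa [Function.comp_def] using (Real.hasDerivAt_cos (s * r x)).comp x (hm.const_mul s)
  -- derivative of RHS
  have h2 : HasDerivAt (fun t => Real.cos (s * t) * Real.cos (s * r₀) -
      rdot₀ * Real.sin (s * t) * Real.sin (s * r₀))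
      ((-Real.sin (s * x) * s) * Real.cos (s * r₀) -
        rdot₀ * (Real.cos (s * x) * s) * Real.sin (s * r₀)) x := by
    have hc : HasDerivAt (fun t => Real.cos (s * t)) (-Real.sin (s * x) * s) x := by
      simpa [Function.comp_def] using (Real.hasDerivAt_cos (s * x)).comp x ((hasDerivAt_id x).const_mul s)
    have hsin : HasDerivAt (fun t => Real.sin (s * t)) (Real.cos (s * x) * s) x := by
      simpa [Function.comp_def] using (Real.hasDerivAt_sin (s * x)).comp x ((hasDerivAt_id x).const_mul s)
    exact (hc.mul_const _).sub ((hsin.const_mul rdot₀).mul_const _)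
  have heq : (fun t => Real.cos (s * r t)) = (fun t => Real.cos (s * t) * Real.cos (s * r₀) -
      rdot₀ * Real.sin (s * t) * Real.sin (s * r₀)) := funext hgeo
  rw [heq] at h1
  have hD := h1.unique h2
  have hs0 : s ≠ 0 := ne_of_gt (Real.sqrt_pos.mpr hκ)
  have hkey := hgeo x
  have hsx : Real.sin (s * x) ≠ 0 := fun h => hx (by rw [← hs] at *; simp [h])
  have hsr : Real.sin (s * r x) ≠ 0 := fun h => hx (by rw [← hs] at *; simp [h])
  have hpyth : Real.sin (s * x) ^ 2 + Real.cos (s * x) ^ 2 = 1 :=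
    Real.sin_sq_add_cos_sq _
  have hmain : s * (m * (Real.sin (s * x) * Real.sin (s * r x))) =
      s * (Real.cos (s * r₀) - Real.cos (s * r x) * Real.cos (s * x)) := by
    linear_combination (-Real.sin (s * x)) * hD + s * Real.cos (s * x) * hkey +
      s * Real.cos (s * r₀) * hpyth
  have hmain2 := mul_left_cancel₀ hs0 hmain
  field_simp
  linarith [hmain2]
end

section
/- Let σ be a geodesic in M \ (C(o) ∪ {o}) satisfying Ŝ(σ') = 0, where Ŝ(X) = (y'∘L_o)/(y∘L_o)·(X - ⟨X,ξ⟩ξ) - ∇_X ξ and ξ = grad L_o. Define ξ⊥ = ξ - ⟨ξ, σ'⟩σ' along σ. Then ∇_{σ'} ξ⊥ = -((y'∘L_o∘σ)/(y∘L_o∘σ))·⟨σ', ξ⟩·ξ⊥, and consequently the normalized field ξ⊥/|ξ⊥| is parallel along σ. -/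
open Set

/-- Along a geodesic `σ` in `M \ (C(o) ∪ {o})` with `Ŝ(σ') = 0`, the
field `ξ⊥ = ξ - ⟨ξ,σ'⟩σ'` satisfies `∇_{σ'} ξ⊥ = -((y'∘L_o∘σ)/(y∘L_o∘σ))⟨σ',ξ⟩ ξ⊥`,
and consequently `ξ⊥/|ξ⊥|` is parallel along `σ`.

Encoding: fields along `σ` are written in a parallel orthonormal frame, as curves in an
inner product space `E`, so that covariant differentiation along `σ` becomes ordinary
differentiation.  `σ'` is the (parallel, unit) velocity field, `ξ` the (unit) radial
field, `c = (y'∘L_o∘σ)/(y∘L_o∘σ)`, and the hypothesis `Ŝ(σ') = 0` reads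
`ξ' = c·(σ' - ⟨σ',ξ⟩ξ)`. -/
theorem stmt11 {E : Type*} [NormedAddCommGroup E] [InnerProductSpace ℝ E]
    (σ' ξ ξperp : ℝ → E) (c : ℝ → ℝ)
    (hσ'unit : ∀ t, ‖σ' t‖ = 1)
    (hσ'par : ∀ t, HasDerivAt σ' (0 : E) t)      -- ∇_{σ'}σ' = 0 (geodesic)
    (hξunit : ∀ t, ‖ξ t‖ = 1)
    (hcc : Continuous c)
    (hShat : ∀ t, HasDerivAt ξ
      (c t • (σ' t - (inner ℝ (σ' t) (ξ t) : ℝ) • ξ t)) t)  -- Ŝ(σ') = 0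
    (hdef : ∀ t, ξperp t = ξ t - (inner ℝ (ξ t) (σ' t) : ℝ) • σ' t) :
    (∀ t, HasDerivAt ξperp ((-(c t * (inner ℝ (σ' t) (ξ t) : ℝ))) • ξperp t) t) ∧
    (∀ t, ξperp t ≠ 0 →
      HasDerivAt (fun s => ‖ξperp s‖⁻¹ • ξperp s) (0 : E) t) := by
  have hfun : ξperp = fun s => ξ s - (inner ℝ (ξ s) (σ' s) : ℝ) • σ' s := funext hdef
  have key : ∀ t, HasDerivAt ξperp ((-(c t * (inner ℝ (σ' t) (ξ t) : ℝ))) • ξperp t) t := by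
    intro t
    have ha := (hShat t).inner ℝ (hσ'par t)
    have h1 := (hShat t).sub ((ha.smul (hσ'par t)))
    rw [hfun]
    convert h1 using 1
    · rfl
    have h11 : (inner ℝ (σ' t) (σ' t) : ℝ) = 1 := by
      rw [real_inner_self_eq_norm_sq, hσ'unit]; norm_num
    have hcomm : (inner ℝ (σ' t) (ξ t) : ℝ) = (inner ℝ (ξ t) (σ' t) : ℝ) := real_inner_comm _ _
    simp only [inner_zero_right, inner_smul_left, inner_sub_left, RCLike.ofReal_real_eq_id, id,
      hcomm, h11, conj_trivial]
    set a := (inner ℝ (ξ t) (σ' t) : ℝ)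
    module
  refine ⟨key, ?_⟩
  intro t ht
  have hg : ∀ s, HasDerivAt (fun u => (inner ℝ (ξperp u) (ξperp u) : ℝ))
      ((inner ℝ (ξperp s) ((-(c s * (inner ℝ (σ' s) (ξ s) : ℝ))) • ξperp s) : ℝ)
        + (inner ℝ ((-(c s * (inner ℝ (σ' s) (ξ s) : ℝ))) • ξperp s) (ξperp s) : ℝ)) s :=
    fun s => (key s).inner ℝ (key s)
  have hrpos : (0:ℝ) < ‖ξperp t‖ := norm_pos_iff.mpr ht
  have hgpos : (0:ℝ) < (inner ℝ (ξperp t) (ξperp t) : ℝ) := by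
    rw [real_inner_self_eq_norm_sq]; positivity
  have hsqrt : HasDerivAt (fun s => Real.sqrt (inner ℝ (ξperp s) (ξperp s) : ℝ))
      ((1 / (2 * Real.sqrt (inner ℝ (ξperp t) (ξperp t) : ℝ))) *
        ((inner ℝ (ξperp t) ((-(c t * (inner ℝ (σ' t) (ξ t) : ℝ))) • ξperp t) : ℝ)
        + (inner ℝ ((-(c t * (inner ℝ (σ' t) (ξ t) : ℝ))) • ξperp t) (ξperp t) : ℝ))) t :=
    (Real.hasDerivAt_sqrt hgpos.ne').comp t (hg t)
  have hnorm_eq : (fun s => Real.sqrt (inner ℝ (ξperp s) (ξperp s) : ℝ)) = fun s => ‖ξperp s‖ := by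
    funext s
    rw [real_inner_self_eq_norm_sq, Real.sqrt_sq (norm_nonneg _)]
  have hsqt : Real.sqrt (inner ℝ (ξperp t) (ξperp t) : ℝ) = ‖ξperp t‖ := by
    rw [real_inner_self_eq_norm_sq, Real.sqrt_sq (norm_nonneg _)]
  rw [hnorm_eq, hsqt] at hsqrt
  have hinv := hsqrt.inv hrpos.ne'
  have hf := hinv.smul (key t)
  convert hf using 1
  · rfl
  rw [real_inner_smul_right, real_inner_smul_left, real_inner_self_eq_norm_sq]
  set r := ‖ξperp t‖
  set k := c t * (inner ℝ (σ' t) (ξ t) : ℝ)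
  have : -(1 / (2 * r) * (-k * r ^ 2 + -k * r ^ 2)) / r ^ 2 = k / r := by
    field_simp; ring
  rw [this]
  match_scalars
  field_simp
  show 0 * r = k * (-(r⁻¹ * r) + 1)
  rw [inv_mul_cancel₀ hrpos.ne']; ring
end
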